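/- arXiv:2209.08299 — 4 statements merged into one kernel-verified Lean document; each statement's English description precedes it below -/
import Mathlib

section
/- Lossless flattening determinacy: Let B, B' : Set (α × Set α) each satisfy the key constraint (any two members with equal first components are equal) and the nonemptiness constraint (every member has nonempty second component). If flatten B = flatten B', then B = B'. -/
def flatten {α : Type*} (B : Set (α × Set α)) : Set (α × α) :=
  { p | ∃ b ∈ B, p.1 = b.1 ∧ p.2 ∈ b.2 }

def KeyConstraint {α : Type*} (B : Set (α × Set α)) : Prop :=
  ∀ b ∈ B, ∀ b' ∈ B, b.1 = b'.1 → b = b'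

def NonemptyConstraint {α : Type*} (B : Set (α × Set α)) : Prop :=
  ∀ b ∈ B, b.2.Nonempty

def Q {α : Type*} (B : Set (α × Set α)) : Set (α × Set α) :=
  { b ∈ B | b.1 ∈ b.2 }

lemma flatten_subset_aux {α : Type*} (B B' : Set (α × Set α))
    (hK : KeyConstraint B) (hK' : KeyConstraint B')
    (hN : NonemptyConstraint B)
    (h : flatten B = flatten B') : B ⊆ B' := by
  intro b hb
  obtain ⟨s, hs⟩ := hN b hb
  have hmem : ((b.1, s) : α × α) ∈ flatten B := ⟨b, hb, rfl, hs⟩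
  rw [h] at hmem
  obtain ⟨b', hb', hfst, _⟩ := hmem
  have hset : b.2 = b'.2 := by
    ext x
    constructor
    · intro hx
      have : ((b.1, x) : α × α) ∈ flatten B := ⟨b, hb, rfl, hx⟩
      rw [h] at this
      obtain ⟨c, hc, hc1, hc2⟩ := this
      have : c = b' := hK' c hc b' hb' (hc1.symm.trans hfst)
      rwa [this] at hc2
    · intro hx
      have : ((b.1, x) : α × α) ∈ flatten B' := ⟨b', hb', hfst, hx⟩
      rw [← h] at this
      obtain ⟨c, hc, hc1, hc2⟩ := this
      have : c = b := hK c hc b hb hc1.symm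
      rwa [this] at hc2
  have : b = b' := Prod.ext hfst hset
  rwa [this]

theorem lossless_flatten_determinacy {α : Type*} (B B' : Set (α × Set α))
    (hK : KeyConstraint B) (hK' : KeyConstraint B')
    (hN : NonemptyConstraint B) (hN' : NonemptyConstraint B')
    (h : flatten B = flatten B') : B = B' :=
  Set.Subset.antisymm (flatten_subset_aux B B' hK hK' hN h)
    (flatten_subset_aux B' B hK' hK hN' h.symm)
end

section
/- Explicit view rewriting of the membership-selection query: Let B : Set (α × Set α) satisfy the key constraint and let V := flatten B. Then Q B = { (k, { e | (k, e) ∈ V }) | (k, k) ∈ V }, i.e., the selection query can be computed from the view alone. -/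
theorem selection_rewriting_over_flatten {α : Type*} (B : Set (α × Set α))
    (hK : KeyConstraint B) :
    Q B = { q : α × Set α | ∃ k : α, (k, k) ∈ flatten B ∧
            q = (k, { e : α | (k, e) ∈ flatten B }) } := by
  ext q
  constructor
  · rintro ⟨hB, hmem⟩
    refine ⟨q.1, ⟨q, hB, rfl, hmem⟩, ?_⟩
    have hset : q.2 = { e : α | (q.1, e) ∈ flatten B } := by
      ext e
      constructor
      · intro he; exact ⟨q, hB, rfl, he⟩
      · rintro ⟨b', hb', h1, h2⟩
        have := hK q hB b' hb' h1
        rw [this]; exact h2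
    exact Prod.ext rfl hset
  · rintro ⟨k, ⟨b, hb, h1, h2⟩, hq⟩
    have hbset : b.2 = { e : α | (k, e) ∈ flatten B } := by
      ext e
      constructor
      · intro he; exact ⟨b, hb, h1, he⟩
      · rintro ⟨b', hb', h1', h2'⟩
        have := hK b hb b' hb' (h1 ▸ h1')
        rw [this]; exact h2'
    simp only [] at h1
    have hbq : q = b := by
      rw [hq]; exact Prod.ext h1 hbset.symm
    rw [hbq]
    exact ⟨hb, h1 ▸ h2⟩
end

section
/- Semantic Craig interpolation for classical propositional logic: if φ and ψ are propositional formulas (over atoms indexed by a type α, with connectives ⊥, ⊤, ¬, ∧, ∨) such that every valuation satisfying φ also satisfies ψ, then there exists a propositional formula θ whose atoms are contained in atoms(φ) ∩ atoms(ψ), such that every valuation satisfying φ satisfies θ and every valuation satisfying θ satisfies ψ. -/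
inductive PForm (α : Type*) : Type _
  | atom : α → PForm α
  | tru : PForm α
  | fls : PForm α
  | not : PForm α → PForm α
  | and : PForm α → PForm α → PForm α
  | or : PForm α → PForm α → PForm α

def PForm.eval {α : Type*} (v : α → Bool) : PForm α → Bool
  | .atom a => v a
  | .tru => true
  | .fls => false
  | .not φ => !(φ.eval v)
  | .and φ ψ => φ.eval v && ψ.eval v
  | .or φ ψ => φ.eval v || ψ.eval v

def PForm.atoms {α : Type*} : PForm α → Set α
  | .atom a => {a}
  | .tru => ∅
  | .fls => ∅
  | .not φ => φ.atoms
  | .and φ ψ => φ.atoms ∪ ψ.atoms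
  | .or φ ψ => φ.atoms ∪ ψ.atoms

namespace PForm

variable {α : Type*}

/-- List of atoms occurring in a formula. -/
def atomList : PForm α → List α
  | .atom a => [a]
  | .tru => []
  | .fls => []
  | .not φ => φ.atomList
  | .and φ ψ => φ.atomList ++ ψ.atomList
  | .or φ ψ => φ.atomList ++ ψ.atomList

lemma mem_atoms_iff (a : α) : ∀ φ : PForm α, a ∈ φ.atoms ↔ a ∈ φ.atomList
  | .atom b => by simp [atoms, atomList]
  | .tru => by simp [atoms, atomList]
  | .fls => by simp [atoms, atomList]
  | .not φ => mem_atoms_iff a φ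
  | .and φ ψ => by
      simp [atoms, atomList, mem_atoms_iff a φ, mem_atoms_iff a ψ]
  | .or φ ψ => by
      simp [atoms, atomList, mem_atoms_iff a φ, mem_atoms_iff a ψ]

/-- Substitute a boolean constant for an atom. -/
def substC [DecidableEq α] (a : α) (c : Bool) : PForm α → PForm α
  | .atom b => if b = a then (if c then .tru else .fls) else .atom b
  | .tru => .tru
  | .fls => .fls
  | .not φ => .not (φ.substC a c)
  | .and φ ψ => .and (φ.substC a c) (ψ.substC a c)
  | .or φ ψ => .or (φ.substC a c) (ψ.substC a c)

lemma eval_substC [DecidableEq α] (a : α) (c : Bool) (v : α → Bool) :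
    ∀ φ : PForm α, (φ.substC a c).eval v = φ.eval (Function.update v a c)
  | .atom b => by
      by_cases hb : b = a
      · subst hb; cases c <;> simp [substC, eval, Function.update]
      · simp [substC, eval, hb, Function.update]
  | .tru => rfl
  | .fls => rfl
  | .not φ => by simp [substC, eval, eval_substC a c v φ]
  | .and φ ψ => by simp [substC, eval, eval_substC a c v φ, eval_substC a c v ψ]
  | .or φ ψ => by simp [substC, eval, eval_substC a c v φ, eval_substC a c v ψ]

lemma atoms_substC [DecidableEq α] (a : α) (c : Bool) :
    ∀ φ : PForm α, (φ.substC a c).atoms ⊆ φ.atoms \ {a}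
  | .atom b => by
      by_cases hb : b = a
      · subst hb; cases c <;> simp [substC, atoms]
      · simp only [substC, if_neg hb, atoms]
        exact fun x hx => ⟨hx, by simp at hx; simp [hx, hb]⟩
  | .tru => by simp [substC, atoms]
  | .fls => by simp [substC, atoms]
  | .not φ => atoms_substC a c φ
  | .and φ ψ => by
      simpa [substC, atoms, Set.union_diff_distrib] using
        Set.union_subset_union (atoms_substC a c φ) (atoms_substC a c ψ)
  | .or φ ψ => by
      simpa [substC, atoms, Set.union_diff_distrib] using
        Set.union_subset_union (atoms_substC a c φ) (atoms_substC a c ψ)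

lemma eval_congr {v w : α → Bool} :
    ∀ φ : PForm α, (∀ a ∈ φ.atoms, v a = w a) → φ.eval v = φ.eval w
  | .atom b, h => h b rfl
  | .tru, _ => rfl
  | .fls, _ => rfl
  | .not φ, h => by simp [eval, eval_congr φ h]
  | .and φ ψ, h => by
      simp [eval, eval_congr φ (fun a ha => h a (Or.inl ha)),
        eval_congr ψ (fun a ha => h a (Or.inr ha))]
  | .or φ ψ, h => by
      simp [eval, eval_congr φ (fun a ha => h a (Or.inl ha)),
        eval_congr ψ (fun a ha => h a (Or.inr ha))]

end PForm

theorem propositional_craig_interpolation {α : Type*} (φ ψ : PForm α)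
    (h : ∀ v : α → Bool, φ.eval v = true → ψ.eval v = true) :
    ∃ θ : PForm α, θ.atoms ⊆ φ.atoms ∩ ψ.atoms ∧
      (∀ v : α → Bool, φ.eval v = true → θ.eval v = true) ∧
      (∀ v : α → Bool, θ.eval v = true → ψ.eval v = true) := by
  classical
  suffices H : ∀ (l : List α) (φ : PForm α),
      (∀ a ∈ φ.atoms, a ∉ ψ.atoms → a ∈ l) →
      (∀ v : α → Bool, φ.eval v = true → ψ.eval v = true) →
      ∃ θ : PForm α, θ.atoms ⊆ φ.atoms ∩ ψ.atoms ∧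
        (∀ v : α → Bool, φ.eval v = true → θ.eval v = true) ∧
        (∀ v : α → Bool, θ.eval v = true → ψ.eval v = true) by
    exact H φ.atomList φ (fun a ha _ => (PForm.mem_atoms_iff a φ).1 ha) h
  intro l
  induction l with
  | nil =>
      intro φ hl hφψ
      refine ⟨φ, fun a ha => ⟨ha, ?_⟩, fun v hv => hv, hφψ⟩
      by_contra hb
      simpa using hl a ha hb
  | cons a l ih =>
      intro φ hl hφψ
      by_cases hmem : a ∈ φ.atoms ∧ a ∉ ψ.atoms
      · obtain ⟨haφ, haψ⟩ := hmem
        set φ' : PForm α := .or (φ.substC a true) (φ.substC a false) with hφ'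
        have hatoms : φ'.atoms ⊆ φ.atoms \ {a} := by
          simpa [hφ', PForm.atoms] using
            Set.union_subset (PForm.atoms_substC a true φ) (PForm.atoms_substC a false φ)
        have hent1 : ∀ v : α → Bool, φ.eval v = true → φ'.eval v = true := by
          intro v hv
          have hupd : Function.update v a (v a) = v := Function.update_eq_self a v
          simp only [hφ', PForm.eval, PForm.eval_substC, Bool.or_eq_true]
          cases hva : v a
          · right
            rw [show Function.update v a false = v by rw [← hva]; exact hupd]
            exact hv
          · left
            rw [show Function.update v a true = v by rw [← hva]; exact hupd]
            exact hv
        have hent2 : ∀ v : α → Bool, φ'.eval v = true → ψ.eval v = true := by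
          intro v hv
          simp only [hφ', PForm.eval, PForm.eval_substC, Bool.or_eq_true] at hv
          rcases hv with hv | hv
          all_goals {
            have := hφψ _ hv
            rw [← this]
            apply PForm.eval_congr
            intro b hb
            have : b ≠ a := fun hba => haψ (hba ▸ hb)
            simp [Function.update, this] }
        obtain ⟨θ, hθ1, hθ2, hθ3⟩ := ih φ'
          (fun b hb hbψ => by
            rcases List.mem_cons.1 (hl b (hatoms hb).1 hbψ) with rfl | hbl
            · exact ((hatoms hb).2 rfl).elim
            · exact hbl)
          hent2
        refine ⟨θ, fun b hb => ⟨(hatoms (hθ1 hb).1).1, (hθ1 hb).2⟩,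
          fun v hv => hθ2 v (hent1 v hv), hθ3⟩
      · refine ih φ (fun b hb hbψ => ?_) hφψ
        rcases List.mem_cons.1 (hl b hb hbψ) with rfl | hbl
        · exact (hmem ⟨hb, hbψ⟩).elim
        · exact hbl
end

section
/- Proof-theoretic Craig interpolation for the one-sided propositional sequent calculus: if ⊢ Γ + Δ is derivable, then there exists a formula θ in negation normal form with atoms θ ⊆ atoms Γ ∩ atoms Δ such that ⊢ Γ + {θ} is derivable and ⊢ Δ + {¬θ} is derivable (where ¬θ denotes the De Morgan dual of θ). -/
inductive Form (α : Type*) : Type _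
  | pos : α → Form α
  | neg : α → Form α
  | tru : Form α
  | fls : Form α
  | and : Form α → Form α → Form α
  | or : Form α → Form α → Form α

def Form.eval {α : Type*} (v : α → Bool) : Form α → Bool
  | .pos a => v a
  | .neg a => !(v a)
  | .tru => true
  | .fls => false
  | .and φ ψ => φ.eval v && ψ.eval v
  | .or φ ψ => φ.eval v || ψ.eval v

inductive Proof {α : Type*} : Multiset (Form α) → Prop
  | ax (Γ : Multiset (Form α)) (a : α) : Proof (Form.pos a ::ₘ Form.neg a ::ₘ Γ)
  | top (Γ : Multiset (Form α)) : Proof (Form.tru ::ₘ Γ)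
  | and {Γ : Multiset (Form α)} {φ₁ φ₂ : Form α} :
      Proof (φ₁ ::ₘ Γ) → Proof (φ₂ ::ₘ Γ) → Proof (Form.and φ₁ φ₂ ::ₘ Γ)
  | or {Γ : Multiset (Form α)} {φ₁ φ₂ : Form α} :
      Proof (φ₁ ::ₘ φ₂ ::ₘ Γ) → Proof (Form.or φ₁ φ₂ ::ₘ Γ)

def Form.dual {α : Type*} : Form α → Form α
  | .pos a => .neg a
  | .neg a => .pos a
  | .tru => .fls
  | .fls => .tru
  | .and φ ψ => .or φ.dual ψ.dual
  | .or φ ψ => .and φ.dual ψ.dual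

def Form.atoms {α : Type*} : Form α → Set α
  | .pos a => {a}
  | .neg a => {a}
  | .tru => ∅
  | .fls => ∅
  | .and φ ψ => φ.atoms ∪ ψ.atoms
  | .or φ ψ => φ.atoms ∪ ψ.atoms

def matoms {α : Type*} (Γ : Multiset (Form α)) : Set α :=
  { a | ∃ φ ∈ Γ, a ∈ φ.atoms }

section Aux
variable {α : Type*}

lemma Proof.weaken {Γ : Multiset (Form α)} (ψ : Form α) (h : Proof Γ) :
    Proof (ψ ::ₘ Γ) := by
  induction h with
  | ax Γ a =>
      rw [Multiset.cons_swap ψ, Multiset.cons_swap ψ]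
      exact Proof.ax _ a
  | top Γ => rw [Multiset.cons_swap]; exact Proof.top _
  | and h1 h2 ih1 ih2 =>
      rw [Multiset.cons_swap]
      refine Proof.and ?_ ?_
      · rw [Multiset.cons_swap]; exact ih1
      · rw [Multiset.cons_swap]; exact ih2
  | or h ih =>
      rw [Multiset.cons_swap]
      refine Proof.or ?_
      rw [Multiset.cons_swap _ ψ, Multiset.cons_swap _ ψ]
      exact ih

lemma matoms_cons (φ : Form α) (Γ : Multiset (Form α)) :
    matoms (φ ::ₘ Γ) = φ.atoms ∪ matoms Γ := by
  ext a
  simp [matoms, Set.mem_setOf_eq, or_and_right, exists_or]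

lemma split_cons {φ : Form α} {S Γ Δ : Multiset (Form α)}
    (h : φ ::ₘ S = Γ + Δ) :
    (∃ Γ', Γ = φ ::ₘ Γ' ∧ S = Γ' + Δ) ∨ (∃ Δ', Δ = φ ::ₘ Δ' ∧ S = Γ + Δ') := by
  classical
  have hm : φ ∈ Γ + Δ := h ▸ Multiset.mem_cons_self φ S
  rcases Multiset.mem_add.1 hm with hG | hD
  · left
    refine ⟨Γ.erase φ, (Multiset.cons_erase hG).symm, ?_⟩
    have : φ ::ₘ S = φ ::ₘ (Γ.erase φ + Δ) := by
      rw [h]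
      conv_lhs => rw [← Multiset.cons_erase hG]
      simp [Multiset.cons_add]
    exact (Multiset.cons_inj_right φ).1 this
  · right
    refine ⟨Δ.erase φ, (Multiset.cons_erase hD).symm, ?_⟩
    have : φ ::ₘ S = φ ::ₘ (Γ + Δ.erase φ) := by
      rw [h]
      conv_lhs => rw [← Multiset.cons_erase hD]
      rw [Multiset.add_cons]
    exact (Multiset.cons_inj_right φ).1 this

end Aux

theorem interp_aux {α : Type*} {S : Multiset (Form α)} (h : Proof S) :
    ∀ Γ Δ : Multiset (Form α), S = Γ + Δ →
    ∃ θ : Form α, θ.atoms ⊆ matoms Γ ∩ matoms Δ ∧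
      Proof (θ ::ₘ Γ) ∧ Proof (θ.dual ::ₘ Δ) := by
  induction h with
  | ax Γ₀ a =>
    intro Γ Δ heq
    rcases split_cons heq with ⟨Γ', rfl, h2⟩ | ⟨Δ', rfl, h2⟩
    · rcases split_cons h2 with ⟨Γ'', rfl, h3⟩ | ⟨Δ'', rfl, h3⟩
      · refine ⟨Form.fls, by simp [Form.atoms], ?_, ?_⟩
        · rw [Multiset.cons_swap Form.fls, Multiset.cons_swap Form.fls]
          exact Proof.ax _ a
        · exact Proof.top _
      · refine ⟨Form.neg a, ?_, ?_, ?_⟩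
        · simp only [Form.atoms, matoms_cons, Set.subset_inter_iff]
          constructor <;> intro x hx <;> simp_all [Form.atoms]
        · rw [Multiset.cons_swap]; exact Proof.ax _ a
        · exact Proof.ax _ a
    · rcases split_cons h2 with ⟨Γ'', rfl, h3⟩ | ⟨Δ'', rfl, h3⟩
      · refine ⟨Form.pos a, ?_, ?_, ?_⟩
        · simp only [Form.atoms, matoms_cons, Set.subset_inter_iff]
          constructor <;> intro x hx <;> simp_all [Form.atoms]
        · exact Proof.ax _ a
        · show Proof (Form.neg a ::ₘ Form.pos a ::ₘ Δ')
          rw [Multiset.cons_swap]; exact Proof.ax _ a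
      · refine ⟨Form.tru, by simp [Form.atoms], Proof.top _, ?_⟩
        show Proof (Form.fls ::ₘ Form.pos a ::ₘ Form.neg a ::ₘ Δ'')
        rw [Multiset.cons_swap Form.fls, Multiset.cons_swap Form.fls]
        exact Proof.ax _ a
  | top Γ₀ =>
    intro Γ Δ heq
    rcases split_cons heq with ⟨Γ', rfl, h2⟩ | ⟨Δ', rfl, h2⟩
    · refine ⟨Form.fls, by simp [Form.atoms], ?_, Proof.top _⟩
      rw [Multiset.cons_swap]; exact Proof.top _
    · refine ⟨Form.tru, by simp [Form.atoms], Proof.top _, ?_⟩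
      show Proof (Form.fls ::ₘ Form.tru ::ₘ Δ')
      rw [Multiset.cons_swap]; exact Proof.top _
  | @and Γ₀ φ₁ φ₂ h1 h2 ih1 ih2 =>
    intro Γ Δ heq
    rcases split_cons heq with ⟨Γ', rfl, hS⟩ | ⟨Δ', rfl, hS⟩
    · obtain ⟨θ₁, hs1, p1, q1⟩ := ih1 (φ₁ ::ₘ Γ') Δ (by rw [hS, Multiset.cons_add])
      obtain ⟨θ₂, hs2, p2, q2⟩ := ih2 (φ₂ ::ₘ Γ') Δ (by rw [hS, Multiset.cons_add])
      refine ⟨Form.or θ₁ θ₂, ?_, ?_, ?_⟩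
      · simp only [Form.atoms, matoms_cons, Set.subset_def, Set.mem_inter_iff,
          Set.mem_union] at *
        intro x hx
        rcases hx with hx | hx
        · have := hs1 x hx; tauto
        · have := hs2 x hx; tauto
      · rw [Multiset.cons_swap]
        refine Proof.and ?_ ?_
        · rw [Multiset.cons_swap]
          refine Proof.or ?_
          rw [Multiset.cons_swap θ₁ θ₂]
          exact p1.weaken θ₂
        · rw [Multiset.cons_swap]
          refine Proof.or ?_
          exact p2.weaken θ₁
      · exact Proof.and q1 q2
    · obtain ⟨θ₁, hs1, p1, q1⟩ := ih1 Γ (φ₁ ::ₘ Δ')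
        (by rw [hS, Multiset.add_cons])
      obtain ⟨θ₂, hs2, p2, q2⟩ := ih2 Γ (φ₂ ::ₘ Δ')
        (by rw [hS, Multiset.add_cons])
      refine ⟨Form.and θ₁ θ₂, ?_, Proof.and p1 p2, ?_⟩
      · simp only [Form.atoms, matoms_cons, Set.subset_def, Set.mem_inter_iff,
          Set.mem_union] at *
        intro x hx
        rcases hx with hx | hx
        · have := hs1 x hx; tauto
        · have := hs2 x hx; tauto
      · show Proof (Form.or θ₁.dual θ₂.dual ::ₘ Form.and φ₁ φ₂ ::ₘ Δ')
        rw [Multiset.cons_swap]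
        refine Proof.and ?_ ?_
        · rw [Multiset.cons_swap]
          refine Proof.or ?_
          rw [Multiset.cons_swap θ₁.dual θ₂.dual]
          exact q1.weaken θ₂.dual
        · rw [Multiset.cons_swap]
          refine Proof.or ?_
          exact q2.weaken θ₁.dual
  | @or Γ₀ φ₁ φ₂ h1 ih =>
    intro Γ Δ heq
    rcases split_cons heq with ⟨Γ', rfl, hS⟩ | ⟨Δ', rfl, hS⟩
    · obtain ⟨θ, hs, p, q⟩ := ih (φ₁ ::ₘ φ₂ ::ₘ Γ') Δ
        (by rw [hS, Multiset.cons_add, Multiset.cons_add])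
      refine ⟨θ, ?_, ?_, q⟩
      · simp only [Form.atoms, matoms_cons, Set.subset_def, Set.mem_inter_iff,
          Set.mem_union] at *
        intro x hx
        have := hs x hx; tauto
      · rw [Multiset.cons_swap]
        refine Proof.or ?_
        rw [Multiset.cons_swap φ₂ θ, Multiset.cons_swap φ₁ θ]
        exact p
    · obtain ⟨θ, hs, p, q⟩ := ih Γ (φ₁ ::ₘ φ₂ ::ₘ Δ')
        (by rw [hS, Multiset.add_cons, Multiset.add_cons])
      refine ⟨θ, ?_, p, ?_⟩
      · simp only [Form.atoms, matoms_cons, Set.subset_def, Set.mem_inter_iff,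
          Set.mem_union] at *
        intro x hx
        have := hs x hx; tauto
      · rw [Multiset.cons_swap]
        refine Proof.or ?_
        rw [Multiset.cons_swap φ₂ θ.dual, Multiset.cons_swap φ₁ θ.dual]
        exact q

theorem sequent_interpolation {α : Type*} (Γ Δ : Multiset (Form α))
    (h : Proof (Γ + Δ)) :
    ∃ θ : Form α, θ.atoms ⊆ matoms Γ ∩ matoms Δ ∧
      Proof (θ ::ₘ Γ) ∧ Proof (θ.dual ::ₘ Δ) := by
  exact interp_aux h Γ Δ rfl
end
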